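/- arXiv:1909.12015 — 2 statements merged into one kernel-verified Lean document; each statement's English description precedes it below -/
import Mathlib

section
/- Let a : ℕ → ℤ be a sequence with a(i) ∈ {-1, 1} for all i. Suppose that for every i and every length k with 1 ≤ k ≤ 5, the window sum |a(i) + a(i+1) + ... + a(i+k-1)| ≤ 2. Then for every i and every n ≥ 0, the window sum |Σ_{j=i}^{i+n-1} a(j)| ≤ ⌊n/5⌋ + m(n mod 5), where m(0) = 0, m(1) = m(3) = 1, and m(2) = m(4) = 2. -/
/-! A window of odd length has odd sum, so the tameness bound `2` improves to `1` on windows of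
length 1, 3 and 5. Cutting a window of length `5q + r` into `q` blocks of length 5 followed by
one of length `r` and applying the triangle inequality gives `q + m r`. -/

open Finset

theorem Int.sum_modEq_card_of_odd {ι : Type*} (s : Finset ι) {f : ι → ℤ}
    (hf : ∀ j ∈ s, Odd (f j)) : ∑ j ∈ s, f j ≡ #s [ZMOD 2] := by
  have heven : Even (∑ j ∈ s, (f j - 1)) :=
    even_sum _ fun j hj ↦ (hf j hj).sub_odd odd_one
  rw [sum_sub_distrib, sum_const, nsmul_one, even_iff_two_dvd] at heven
  exact (Int.modEq_iff_dvd.mpr heven).symm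

theorem abs_sum_Ico_mul_add_le {a : ℕ → ℤ} {p r : ℕ} {c b : ℤ}
    (hp : ∀ i, |∑ j ∈ Ico i (i + p), a j| ≤ c) (hr : ∀ i, |∑ j ∈ Ico i (i + r), a j| ≤ b) :
    ∀ q i, |∑ j ∈ Ico i (i + (p * q + r)), a j| ≤ q * c + b := by
  intro q
  induction q with
  | zero => simpa using hr
  | succ q ih =>
    intro i
    have hsplit : ∑ j ∈ Ico i (i + (p * (q + 1) + r)), a j
        = ∑ j ∈ Ico i (i + p), a j + ∑ j ∈ Ico (i + p) (i + p + (p * q + r)), a j := by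
      rw [sum_Ico_consecutive _ (Nat.le_add_right _ _) (Nat.le_add_right _ _)]
      congr 2
      ring
    calc |∑ j ∈ Ico i (i + (p * (q + 1) + r)), a j|
        ≤ |∑ j ∈ Ico i (i + p), a j| + |∑ j ∈ Ico (i + p) (i + p + (p * q + r)), a j| :=
          hsplit ▸ abs_add_le _ _
      _ ≤ c + (q * c + b) := add_le_add (hp i) (ih (i + p))
      _ = ↑(q + 1) * c + b := by push_cast; ring

theorem abs_sum_Ico_le_one_of_odd {a : ℕ → ℤ} (ha : ∀ i, a i = 1 ∨ a i = -1) {i k : ℕ}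
    (hk : Odd k) (hsum : |∑ j ∈ Ico i (i + k), a j| ≤ 2) : |∑ j ∈ Ico i (i + k), a j| ≤ 1 := by
  have hmod := Int.sum_modEq_card_of_odd (Ico i (i + k)) (f := a) fun j _ ↦ by
    rcases ha j with h | h <;> simp [h]
  rw [Nat.card_Ico, Nat.add_sub_cancel_left, Int.ModEq] at hmod
  have hk2 : (k : ℤ) % 2 = 1 := Int.odd_iff.mp (by exact_mod_cast hk)
  rw [abs_le] at hsum ⊢
  omega

theorem stmt_7 (a : ℕ → ℤ) (ha : ∀ i, a i = 1 ∨ a i = -1)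
    (htame : ∀ i k, 1 ≤ k → k ≤ 5 → |∑ j ∈ Finset.Ico i (i + k), a j| ≤ 2)
    (m : ℕ → ℤ) (hm0 : m 0 = 0) (hm1 : m 1 = 1) (hm2 : m 2 = 2) (hm3 : m 3 = 1)
    (hm4 : m 4 = 2) :
    ∀ i n, |∑ j ∈ Finset.Ico i (i + n), a j| ≤ (n / 5 : ℕ) + m (n % 5) := by
  intro i n
  have hodd {k} (hk : Odd k) (hk1 : 1 ≤ k) (hk5 : k ≤ 5) i :=
    abs_sum_Ico_le_one_of_odd ha hk (htame i k hk1 hk5)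
  have hrem : ∀ i, |∑ j ∈ Ico i (i + n % 5), a j| ≤ m (n % 5) := by
    have : n % 5 < 5 := Nat.mod_lt _ (by norm_num)
    interval_cases n % 5
    · simp [hm0]
    · exact hm1 ▸ hodd (by decide) le_rfl (by norm_num)
    · exact hm2 ▸ (htame · 2 (by norm_num) (by norm_num))
    · exact hm3 ▸ hodd (by decide) (by norm_num) (by norm_num)
    · exact hm4 ▸ (htame · 4 (by norm_num) (by norm_num))
  simpa [Nat.div_add_mod] using
    abs_sum_Ico_mul_add_le (hodd (by decide) (by norm_num) le_rfl) hrem (n / 5) i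
end

section
/- Let n ≥ 8 be even, and define the coloring ψ : ZMod n → ZMod 3 of the cycle C_n whose consecutive values are 0,1,2,1,2,1,0,1 followed by the pattern 0,1 repeated (n-8)/2 times. Then ψ is a proper 3-coloring, it is tame (every window of at most 5 consecutive edge values δ(i) ∈ {-1,1} has sum of absolute value at most 2), and the total sum Σ_i δ(i) = 0. -/
/-!
Lift ψ to the integer height function `h` with values `0,1,2,1,2,1,0,1,0,1,…,0,1` and
`h n = h 0 = 0`. Every edge value is forced to be the integer step `h (i+1) - h i`, since two
integers in `{-1, 1}` that agree mod 3 are equal. Hence every window sum of δ telescopes to a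
difference of two heights in `[0, 2]`, and the total sum is `h n - h 0 = 0`.
-/

lemma Int.eq_of_intCast_eq_of_abs_sub_lt {m : ℕ} {a b : ℤ} (h : (a : ZMod m) = b)
    (hab : |b - a| < m) : a = b :=
  (sub_eq_zero.mp <| Int.eq_zero_of_abs_lt_dvd
    ((ZMod.intCast_eq_intCast_iff_dvd_sub a b m).mp h) hab).symm

lemma intCast_ne_of_sub_eq_one_or {a b : ℤ} (hab : a - b = 1 ∨ a - b = -1) :
    (a : ZMod 3) ≠ b := by
  intro heq
  have := Int.eq_of_intCast_eq_of_abs_sub_lt heq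
    (by rcases hab with hab | hab <;> rw [abs_sub_comm, hab] <;> norm_num)
  omega

structure IsHeightFunction {n : ℕ} (ψ : ZMod n → ZMod 3) (h : ℕ → ℤ) : Prop where
  intCast_eq : ∀ m : ℕ, ψ m = h m
  step : ∀ m, h (m + 1) - h m = 1 ∨ h (m + 1) - h m = -1

namespace IsHeightFunction

variable {n : ℕ} {ψ : ZMod n → ZMod 3} {h : ℕ → ℤ}

lemma succ_ne [NeZero n] (hh : IsHeightFunction ψ h) (i : ZMod n) : ψ (i + 1) ≠ ψ i := by
  rw [← ZMod.natCast_zmod_val i, ← Nat.cast_succ, hh.intCast_eq, hh.intCast_eq]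
  exact intCast_ne_of_sub_eq_one_or (hh.step i.val)

lemma edgeValue_eq (hh : IsHeightFunction ψ h) {δ : ZMod n → ℤ}
    (hδ : ∀ i, (δ i = 1 ∨ δ i = -1) ∧ ψ (i + 1) = ψ i + (δ i : ZMod 3)) (m : ℕ) :
    δ m = h (m + 1) - h m := by
  obtain ⟨hpm, hψδ⟩ := hδ m
  rw [← Nat.cast_succ, hh.intCast_eq, hh.intCast_eq] at hψδ
  refine Int.eq_of_intCast_eq_of_abs_sub_lt (m := 3) ?_ ?_
  · push_cast
    rw [hψδ]
    ring
  · rcases hpm with hd | hd <;> rcases hh.step m with hs | hs <;> rw [hd, hs] <;> norm_num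

lemma sum_Ico_edgeValue (hh : IsHeightFunction ψ h) {δ : ZMod n → ℤ}
    (hδ : ∀ i, (δ i = 1 ∨ δ i = -1) ∧ ψ (i + 1) = ψ i + (δ i : ZMod 3)) {a b : ℕ}
    (hab : a ≤ b) : ∑ j ∈ Finset.Ico a b, δ (j : ZMod n) = h b - h a := by
  simp_rw [hh.edgeValue_eq hδ]
  exact Finset.sum_Ico_sub h hab

end IsHeightFunction

def pattern (k : ℕ) : ℤ :=
  if k < 8 then ([0, 1, 2, 1, 2, 1, 0, 1] : List ℤ).getD k 0
  else if (k - 8) % 2 = 0 then 0 else 1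

lemma intCast_pattern (k : ℕ) :
    (pattern k : ZMod 3) =
      if k < 8 then ([0, 1, 2, 1, 2, 1, 0, 1] : List (ZMod 3)).getD k 0
      else if (k - 8) % 2 = 0 then 0 else 1 := by
  unfold pattern
  split_ifs with hk
  · interval_cases k <;> decide
  all_goals simp

lemma pattern_mem_Icc (k : ℕ) : pattern k ∈ Set.Icc 0 2 := by
  unfold pattern
  split_ifs with hk
  · interval_cases k <;> decide
  all_goals simp

lemma abs_pattern_sub_pattern_le (a b : ℕ) : |pattern a - pattern b| ≤ 2 := by
  obtain ⟨ha₀, ha₂⟩ := pattern_mem_Icc a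
  obtain ⟨hb₀, hb₂⟩ := pattern_mem_Icc b
  rw [abs_le]
  constructor <;> linarith

lemma pattern_succ_sub (k : ℕ) :
    pattern (k + 1) - pattern k = 1 ∨ pattern (k + 1) - pattern k = -1 := by
  rcases Nat.lt_or_ge k 8 with hk | hk
  · interval_cases k <;> decide
  · unfold pattern
    split_ifs <;> omega

lemma pattern_of_odd {k : ℕ} (hk : 7 ≤ k) (hodd : Odd k) : pattern k = 1 := by
  obtain rfl | hk := hk.eq_or_lt
  · rfl
  · obtain ⟨t, rfl⟩ := hodd
    unfold pattern
    split_ifs <;> omega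

lemma pattern_mod_succ_sub {n : ℕ} (hn : 8 ≤ n) (heven : Even n) (m : ℕ) :
    pattern ((m + 1) % n) - pattern (m % n) = 1 ∨
      pattern ((m + 1) % n) - pattern (m % n) = -1 := by
  have hlt : m % n < n := Nat.mod_lt m (by omega)
  rw [Nat.add_mod_eq_ite, Nat.mod_eq_of_lt (show 1 < n by omega)]
  split_ifs with hwrap
  -- the wrap-around step `n - 1 → 0` goes from height 1 down to 0 because `n` is even
  · have hlast : m % n = n - 1 := by omega
    rw [show m % n + 1 - n = 0 by omega, hlast,
      pattern_of_odd (by omega) (Nat.Even.sub_odd (by omega) heven odd_one)]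
    right
    rfl
  · exact pattern_succ_sub _

theorem stmt_17 (n : ℕ) (hn : 8 ≤ n) (heven : Even n)
    (ψ : ZMod n → ZMod 3)
    (hψ : ∀ k : ℕ, k < n → ψ (k : ZMod n) =
      (if k < 8 then ([0,1,2,1,2,1,0,1] : List (ZMod 3)).getD k 0
       else if (k - 8) % 2 = 0 then 0 else 1)) :
    (∀ i : ZMod n, ψ (i + 1) ≠ ψ i) ∧
    (∀ δ : ZMod n → ℤ,
      (∀ i, (δ i = 1 ∨ δ i = -1) ∧ ψ (i + 1) = ψ i + (δ i : ZMod 3)) →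
      ((∀ (i k : ℕ), 1 ≤ k → k ≤ 5 →
        |∑ j ∈ Finset.Ico i (i + k), δ (j : ZMod n)| ≤ 2) ∧
       (∑ j ∈ Finset.range n, δ (j : ZMod n)) = 0)) := by
  have : NeZero n := ⟨by omega⟩
  have hh : IsHeightFunction ψ (fun m => pattern (m % n)) := by
    refine ⟨fun m => ?_, pattern_mod_succ_sub hn heven⟩
    rw [← ZMod.natCast_mod m n, hψ _ (Nat.mod_lt m (by omega)), intCast_pattern]
  refine ⟨hh.succ_ne, fun δ hδ => ⟨fun i k _ _ => ?_, ?_⟩⟩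
  · rw [hh.sum_Ico_edgeValue hδ (by omega)]
    exact abs_pattern_sub_pattern_le _ _
  · rw [Finset.range_eq_Ico, hh.sum_Ico_edgeValue hδ (Nat.zero_le n), Nat.mod_self,
      Nat.zero_mod, sub_self]
end
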